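/- Let n ≥ 2 and let x ∈ {0,1}^n be not the all-one sequence. If y ∈ {0,1}^{n−1} is obtained from x by deleting a single symbol equal to 1 (and no substitution), then there exist distinct d, e ∈ {1,…,n} with x_d = 0 and x_e = 1 such that y = E(x, d, e); that is, y can also be obtained from x by deleting a 0 and substituting a 1 with a 0. -/

import Mathlib

/-- The bit of `x` at 1-based position `p` (junk value `0` out of range). -/
def getBit {n : ℕ} (x : Fin n → Fin 2) (p : ℕ) : Fin 2 :=
  if h : p - 1 < n then x ⟨p - 1, h⟩ else 0

/-- Hamming weight of a binary sequence. -/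
def wt {n : ℕ} (x : Fin n → Fin 2) : ℕ := ∑ i, (x i : ℕ)

/-- The `j`-th order VT syndrome `f_j(x) = Σ_{i=1}^n (Σ_{ℓ=1}^i ℓ^{j-1}) x_i`. -/
def vtSyn {n : ℕ} (j : ℕ) (x : Fin n → Fin 2) : ℕ :=
  ∑ i : Fin n, (∑ l ∈ Finset.Icc 1 ((i : ℕ) + 1), l ^ (j - 1)) * (x i : ℕ)

/-- Substitute the symbol at 1-based position `e` of `x` with its complement. -/
def substAt {n : ℕ} (x : Fin n → Fin 2) (e : ℕ) : Fin n → Fin 2 :=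
  fun i => if (i : ℕ) + 1 = e then 1 - x i else x i

/-- Delete the symbol at 1-based position `d` of `x`. -/
def delAt {n : ℕ} (x : Fin n → Fin 2) (d : ℕ) : Fin (n - 1) → Fin 2 :=
  fun i => if (i : ℕ) + 1 < d then getBit x ((i : ℕ) + 1) else getBit x ((i : ℕ) + 2)

/-- `E(x,d,e)`: delete the symbol at position `d` and substitute the symbol at
position `e` of `x` (positions are 1-based, taken in the original `x`). -/
def delSub {n : ℕ} (x : Fin n → Fin 2) (d e : ℕ) : Fin (n - 1) → Fin 2 :=
  delAt (substAt x e) d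

/-- The single-deletion single-substitution error ball `B_{1,1}(x)`. -/
def ball {n : ℕ} (x : Fin n → Fin 2) : Set (Fin (n - 1) → Fin 2) :=
  {y | (∃ d ∈ Finset.Icc 1 n, y = delAt x d) ∨
       ∃ d ∈ Finset.Icc 1 n, ∃ e ∈ Finset.Icc 1 n, d ≠ e ∧ y = delSub x d e}

/-- The code `C_n(c0,c1,c2)`. -/
def codeC (n : ℕ) (c0 c1 c2 : ℕ) : Finset (Fin n → Fin 2) :=
  Finset.univ.filter fun x =>
    x ≠ (fun _ => 0) ∧ x ≠ (fun _ => 1) ∧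
    wt x % 4 = c0 ∧ vtSyn 1 x % (2 * n) = c1 ∧ vtSyn 2 x % (2 * n ^ 2) = c2

/-- `u_i = Σ_{ℓ=i}^n x_ℓ − Σ_{ℓ=i}^n x'_ℓ` (1-based positions, value in `ℤ`). -/
def uSeq {n : ℕ} (x x' : Fin n → Fin 2) (i : ℕ) : ℤ :=
  (∑ l ∈ Finset.Icc i n, ((getBit x l : ℕ) : ℤ)) -
    ∑ l ∈ Finset.Icc i n, ((getBit x' l : ℕ) : ℤ)


/-! Deleting any symbol of a run of equal symbols gives the same word. So deleting the `1` at `d0`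
is the same as deleting the `1` at the end `e` of its run of ones that touches a `0`, at a
position `d` next to `e`. Flipping that `1` turns positions `d` and `e` into a run `00`, so
deleting `d` from the flipped word is again deleting `e` from `x`. -/

section Deletion

variable {n : ℕ} (x : Fin n → Fin 2)

lemma getBit_succ (i : Fin n) : getBit x ((i : ℕ) + 1) = x i := by
  simp [getBit]

lemma le_of_getBit_eq_one {p : ℕ} (h : getBit x p = 1) : p ≤ n := by
  unfold getBit at h
  split_ifs at h with hp
  · omega
  · exact absurd h (by decide)

lemma exists_getBit_eq_zero (h : x ≠ fun _ => 1) :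
    ∃ p ∈ Finset.Icc 1 n, getBit x p = 0 := by
  obtain ⟨i, hi⟩ := Function.ne_iff.1 h
  refine ⟨(i : ℕ) + 1, Finset.mem_Icc.2 ⟨by omega, i.isLt⟩, ?_⟩
  rw [getBit_succ]
  by_contra h0
  exact hi (Fin.eq_one_of_ne_zero _ h0)

/-- `0 < p` is needed because `getBit x 0 = getBit x 1` (truncated subtraction `0 - 1 = 0`). -/
lemma getBit_substAt_of_ne {e p : ℕ} (hp : 0 < p) (h : p ≠ e) :
    getBit (substAt x e) p = getBit x p := by
  by_cases hlt : p - 1 < n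
  · simp [getBit, substAt, hlt, show p - 1 + 1 ≠ e by omega]
  · simp [getBit, hlt]

lemma getBit_substAt_self {e : ℕ} (he : e ∈ Finset.Icc 1 n) :
    getBit (substAt x e) e = 1 - getBit x e := by
  obtain ⟨he1, hen⟩ := Finset.mem_Icc.1 he
  have hlt : e - 1 < n := by omega
  simp [getBit, substAt, hlt, Nat.sub_add_cancel he1]

lemma delAt_substAt_self (e : ℕ) : delAt (substAt x e) e = delAt x e := by
  funext i
  unfold delAt
  split_ifs <;> exact getBit_substAt_of_ne x (by omega) (by omega)

lemma delAt_eq_delAt_succ {q : ℕ} (h : getBit x q = getBit x (q + 1)) :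
    delAt x q = delAt x (q + 1) := by
  funext i
  unfold delAt
  split_ifs
  · rfl
  · omega
  · obtain rfl : (i : ℕ) + 1 = q := by omega
    exact h.symm
  · rfl

lemma delSub_eq_delAt_of_adjacent {d e : ℕ} (he : e ∈ Finset.Icc 1 n) (hd_pos : 0 < d)
    (hd : getBit x d = 0) (he1 : getBit x e = 1) (hde : d + 1 = e ∨ e + 1 = d) :
    delSub x d e = delAt x e := by
  have hsubst_e : getBit (substAt x e) e = 0 := by
    rw [getBit_substAt_self x he, he1]
    rfl
  have hsubst_d : getBit (substAt x e) d = 0 := by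
    rw [getBit_substAt_of_ne x hd_pos (by omega), hd]
  rw [delSub, ← delAt_substAt_self x e]
  rcases hde with rfl | rfl
  · exact delAt_eq_delAt_succ _ (hsubst_d.trans hsubst_e.symm)
  · exact (delAt_eq_delAt_succ _ (hsubst_e.trans hsubst_d.symm)).symm

lemma exists_delAt_eq_next_to_zero_left {p : ℕ} (hp : getBit x p = 0) (k : ℕ)
    (hd0 : getBit x (p + k + 1) = 1) :
    ∃ e, p < e ∧ getBit x (e - 1) = 0 ∧ getBit x e = 1 ∧
      delAt x e = delAt x (p + k + 1) := by
  induction k with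
  | zero => exact ⟨p + 1, by omega, hp, hd0, rfl⟩
  | succ k ih =>
    by_cases hprev : getBit x (p + k + 1) = 0
    · exact ⟨p + (k + 1) + 1, by omega, hprev, hd0, rfl⟩
    · have hprev : getBit x (p + k + 1) = 1 := Fin.eq_one_of_ne_zero _ hprev
      obtain ⟨e, hpe, he0, he1, hdel⟩ := ih hprev
      refine ⟨e, hpe, he0, he1, hdel.trans (delAt_eq_delAt_succ x ?_)⟩
      rw [hprev, add_assoc p k 1, hd0]

lemma exists_delAt_eq_next_to_zero_right (k : ℕ) {d0 : ℕ} (hd0 : getBit x d0 = 1)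
    (hp : getBit x (d0 + k + 1) = 0) :
    ∃ e, d0 ≤ e ∧ e < d0 + k + 1 ∧ getBit x (e + 1) = 0 ∧ getBit x e = 1 ∧
      delAt x e = delAt x d0 := by
  induction k generalizing d0 with
  | zero => exact ⟨d0, le_rfl, by omega, hp, hd0, rfl⟩
  | succ k ih =>
    by_cases hnext : getBit x (d0 + 1) = 0
    · exact ⟨d0, le_rfl, by omega, hnext, hd0, rfl⟩
    · have hnext : getBit x (d0 + 1) = 1 := Fin.eq_one_of_ne_zero _ hnext
      obtain ⟨e, hde, hep, he0, he1, hdel⟩ :=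
        ih hnext (by rwa [show d0 + 1 + k + 1 = d0 + (k + 1) + 1 by omega])
      refine ⟨e, by omega, by omega, he0, he1, hdel.trans (delAt_eq_delAt_succ x ?_).symm⟩
      rw [hd0, hnext]

end Deletion

theorem stmt7_general (n : ℕ) (x : Fin n → Fin 2)
    (h1 : x ≠ fun _ => 1)
    (d0 : ℕ) (hd0 : d0 ∈ Finset.Icc 1 n) (hx1 : getBit x d0 = 1)
    (y : Fin (n - 1) → Fin 2) (hy : y = delAt x d0) :
    ∃ d ∈ Finset.Icc 1 n, ∃ e ∈ Finset.Icc 1 n,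
      d ≠ e ∧ getBit x d = 0 ∧ getBit x e = 1 ∧ y = delSub x d e := by
  subst hy
  obtain ⟨p, hp, hp0⟩ := exists_getBit_eq_zero x h1
  rw [Finset.mem_Icc] at hp hd0
  rcases lt_or_gt_of_ne (show p ≠ d0 by rintro rfl; simp [hp0] at hx1) with hlt | hgt
  · obtain ⟨k, rfl⟩ := Nat.exists_eq_add_of_lt hlt
    obtain ⟨e, hpe, he0, he1, hdel⟩ := exists_delAt_eq_next_to_zero_left x hp0 k hx1
    have hen := le_of_getBit_eq_one x he1
    have he : e ∈ Finset.Icc 1 n := Finset.mem_Icc.2 ⟨by omega, hen⟩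
    refine ⟨e - 1, Finset.mem_Icc.2 ⟨by omega, by omega⟩, e, he, by omega, he0, he1, ?_⟩
    rw [delSub_eq_delAt_of_adjacent x he (by omega) he0 he1 (by omega), hdel]
  · obtain ⟨k, rfl⟩ := Nat.exists_eq_add_of_lt hgt
    obtain ⟨e, hde, hep, he0, he1, hdel⟩ := exists_delAt_eq_next_to_zero_right x k hx1 hp0
    have he : e ∈ Finset.Icc 1 n := Finset.mem_Icc.2 ⟨by omega, le_of_getBit_eq_one x he1⟩
    refine ⟨e + 1, Finset.mem_Icc.2 ⟨by omega, by omega⟩, e, he, by omega, he0, he1, ?_⟩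
    rw [delSub_eq_delAt_of_adjacent x he (by omega) he0 he1 (by omega), hdel]

/-- if `x` is not all-one and `y` is obtained from `x` by deleting
a `1`, then `y = E(x,d,e)` for some distinct `d, e` with `x_d = 0`, `x_e = 1`. -/
theorem stmt7 (n : ℕ) (hn : 2 ≤ n) (x : Fin n → Fin 2)
    (h1 : x ≠ fun _ => 1)
    (d0 : ℕ) (hd0 : d0 ∈ Finset.Icc 1 n) (hx1 : getBit x d0 = 1)
    (y : Fin (n - 1) → Fin 2) (hy : y = delAt x d0) :
    ∃ d ∈ Finset.Icc 1 n, ∃ e ∈ Finset.Icc 1 n,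
      d ≠ e ∧ getBit x d = 0 ∧ getBit x e = 1 ∧ y = delSub x d e :=
  stmt7_general n x h1 d0 hd0 hx1 y hy
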